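/- Suppose an allocation d̄ has at least two distinct exchange ratio levels, its minimum-ratio set L̄_1 is independent, and ∑_{i∈L̄_1} r̄_i = ∑_{i∈N(L̄_1)} D_i. Then L̄_1 equals the minimum-ratio set L*_1 of the (unique) lex-optimal exchange ratio vector, and the minimum ratio of d̄ equals the lex-optimal minimum level l*_1. -/

import Mathlib

open Finset

noncomputable section

variable {V : Type*}

/-- An allocation: nonnegative, supported on edges, each node distributes its full endowment. -/
def IsAlloc [Fintype V] [DecidableEq V] (G : SimpleGraph V) [DecidableRel G.Adj]
    (D : V → ℝ) (d : V → V → ℝ) : Prop :=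
  (∀ i j, 0 ≤ d i j) ∧ (∀ i j, ¬ G.Adj i j → d i j = 0) ∧
  (∀ i, ∑ j ∈ G.neighborFinset i, d i j = D i)

/-- Received resource of node `i`. -/
def recv [Fintype V] [DecidableEq V] (G : SimpleGraph V) [DecidableRel G.Adj]
    (d : V → V → ℝ) (i : V) : ℝ := ∑ j ∈ G.neighborFinset i, d j i

/-- Exchange ratio of node `i`. -/
def ratio [Fintype V] [DecidableEq V] (G : SimpleGraph V) [DecidableRel G.Adj]
    (D : V → ℝ) (d : V → V → ℝ) (i : V) : ℝ := recv G d i / D i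

/-- Total resource flowing into `S` from outside. -/
def inFlow [Fintype V] [DecidableEq V] (G : SimpleGraph V) [DecidableRel G.Adj]
    (d : V → V → ℝ) (S : Finset V) : ℝ :=
  ∑ i ∈ S, ∑ j ∈ G.neighborFinset i \ S, d j i

/-- Total resource flowing out of `S`. -/
def outFlow [Fintype V] [DecidableEq V] (G : SimpleGraph V) [DecidableRel G.Adj]
    (d : V → V → ℝ) (S : Finset V) : ℝ :=
  ∑ i ∈ S, ∑ j ∈ G.neighborFinset i \ S, d i j

/-- Sorted (non-decreasing) list of exchange ratios. -/
def sortedRatios [Fintype V] [DecidableEq V] (G : SimpleGraph V) [DecidableRel G.Adj]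
    (D : V → ℝ) (d : V → V → ℝ) : List ℝ :=
  (Finset.univ.val.map (ratio G D d)).sort (· ≤ ·)

/-- Lexicographic optimality: no allocation gives a lexicographically larger sorted ratio vector. -/
def LexOpt [Fintype V] [DecidableEq V] (G : SimpleGraph V) [DecidableRel G.Adj]
    (D : V → ℝ) (d : V → V → ℝ) : Prop :=
  IsAlloc G D d ∧ ∀ d', IsAlloc G D d' →
    ¬ List.Lex (· < ·) (sortedRatios G D d) (sortedRatios G D d')

/-- Minimum exchange ratio. -/
def minRatio [Fintype V] [Nonempty V] [DecidableEq V] (G : SimpleGraph V) [DecidableRel G.Adj]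
    (D : V → ℝ) (d : V → V → ℝ) : ℝ := Finset.univ.inf' Finset.univ_nonempty (ratio G D d)

/-- Maximum exchange ratio. -/
def maxRatio [Fintype V] [Nonempty V] [DecidableEq V] (G : SimpleGraph V) [DecidableRel G.Adj]
    (D : V → ℝ) (d : V → V → ℝ) : ℝ := Finset.univ.sup' Finset.univ_nonempty (ratio G D d)

/-- The set `L₁` of nodes attaining the minimum exchange ratio. -/
def minSet [Fintype V] [Nonempty V] [DecidableEq V] (G : SimpleGraph V) [DecidableRel G.Adj]
    (D : V → ℝ) (d : V → V → ℝ) : Finset V :=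
  Finset.univ.filter (fun i => ratio G D d i = minRatio G D d)

/-- The set `L_K` of nodes attaining the maximum exchange ratio. -/
def maxSet [Fintype V] [Nonempty V] [DecidableEq V] (G : SimpleGraph V) [DecidableRel G.Adj]
    (D : V → ℝ) (d : V → V → ℝ) : Finset V :=
  Finset.univ.filter (fun i => ratio G D d i = maxRatio G D d)

/-- External neighborhood of a set of nodes. -/
def extNbhd [Fintype V] [DecidableEq V] (G : SimpleGraph V) [DecidableRel G.Adj]
    (S : Finset V) : Finset V := (S.biUnion fun i => G.neighborFinset i) \ S

/-!
Any allocation `d*` sends into the independent set `L̄₁` at most the endowment of `N(L̄₁)`, which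
by hypothesis is exactly what `d̄` delivers there. Hence some node of `L̄₁` has `ρ*` at most `l̄₁`,
so `l*₁ ≤ l̄₁`; lex-optimality gives the reverse, and then the same budget forces `ρ* = l̄₁` on all
of `L̄₁`. So `L̄₁ ⊆ L*₁`, and a strict inclusion would make the sorted ratio vector of `d̄`
lexicographically larger than that of `d*`.
-/

/-- Only `l₂` need be sorted: it starts with its copies of `m`, and `l₁` must leave that run
with a larger entry. -/
theorem List.lex_of_count_lt_count {α : Type*} [LinearOrder α] {m : α} :
    ∀ {l₁ l₂ : List α}, l₂.Pairwise (· ≤ ·) → (∀ x ∈ l₁, m ≤ x) → (∀ x ∈ l₂, m ≤ x) →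
      l₁.length = l₂.length → l₁.count m < l₂.count m → List.Lex (· < ·) l₂ l₁
  | _, [], _, _, _, _, hc => by simp at hc
  | [], _ :: _, _, _, _, hl, _ => by simp at hl
  | a :: t₁, b :: t₂, hs, h₁, h₂, hl, hc => by
    obtain ⟨hb, ht₂⟩ := List.pairwise_cons.mp hs
    have hmb : b = m := by
      refine le_antisymm ?_ (h₂ b List.mem_cons_self)
      rcases List.mem_cons.mp (List.count_pos_iff.mp (Nat.zero_lt_of_lt hc)) with h | h
      · exact h.ge
      · exact hb m h
    subst hmb
    rcases (h₁ a List.mem_cons_self).lt_or_eq with hlt | rfl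
    · exact List.Lex.rel hlt
    · rw [List.count_cons_self, List.count_cons_self] at hc
      exact List.Lex.cons <| lex_of_count_lt_count ht₂
        (fun x hx => h₁ x (List.mem_cons_of_mem _ hx)) (fun x hx => h₂ x (List.mem_cons_of_mem _ hx))
        (by simpa using hl) (by omega)

section Allocation

variable [Fintype V] [DecidableEq V] {G : SimpleGraph V} [DecidableRel G.Adj]
  {D : V → ℝ} {d d' : V → V → ℝ} {i : V}

theorem sortedRatios_pairwise : (sortedRatios G D d).Pairwise (· ≤ ·) :=
  Multiset.pairwise_sort _ _

theorem mem_sortedRatios {x : ℝ} : x ∈ sortedRatios G D d ↔ ∃ i, ratio G D d i = x := by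
  simp [sortedRatios]

theorem length_sortedRatios : (sortedRatios G D d).length = Fintype.card V := by
  simp [sortedRatios]

theorem count_sortedRatios (x : ℝ) :
    (sortedRatios G D d).count x = #{i | ratio G D d i = x} := by
  rw [sortedRatios, ← Multiset.coe_count, Multiset.sort_eq, Multiset.count_map]
  exact congrArg Multiset.card (Multiset.filter_congr fun _ _ => eq_comm)

theorem recv_eq_ratio_mul (hD : D i ≠ 0) : recv G d i = ratio G D d i * D i :=
  (div_mul_cancel₀ _ hD).symm

/-- Every neighbour of an independent set `L` lies in `N(L)`, and sends at most its endowment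
into `L`. -/
theorem sum_recv_le_sum_extNbhd (hd : IsAlloc G D d) {L : Finset V}
    (hind : ∀ i ∈ L, ∀ j ∈ L, ¬ G.Adj i j) :
    ∑ i ∈ L, recv G d i ≤ ∑ j ∈ extNbhd G L, D j := by
  have hswap : ∑ i ∈ L, recv G d i = ∑ j ∈ extNbhd G L, ∑ i ∈ G.neighborFinset j ∩ L, d j i := by
    refine Finset.sum_comm' fun i j => ?_
    simp only [extNbhd, mem_inter, mem_sdiff, mem_biUnion, SimpleGraph.mem_neighborFinset]
    exact ⟨fun ⟨hi, hij⟩ => ⟨⟨hij.symm, hi⟩, ⟨i, hi, hij⟩, fun hj => hind i hi j hj hij⟩,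
      fun ⟨⟨hji, hi⟩, _⟩ => ⟨hi, hji.symm⟩⟩
  rw [hswap]
  refine Finset.sum_le_sum fun j _ => ?_
  rw [← hd.2.2 j]
  exact Finset.sum_le_sum_of_subset_of_nonneg inter_subset_left fun i _ _ => hd.1 j i

theorem LexOpt.card_ratio_eq_le (hopt : LexOpt G D d') (hd : IsAlloc G D d) {m : ℝ}
    (hm : ∀ i, m ≤ ratio G D d i) (hm' : ∀ i, m ≤ ratio G D d' i) :
    #{i | ratio G D d' i = m} ≤ #{i | ratio G D d i = m} := by
  by_contra! hlt
  refine hopt.2 d hd (List.lex_of_count_lt_count (m := m) sortedRatios_pairwise ?_ ?_ ?_ ?_)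
  · intro x hx
    obtain ⟨i, rfl⟩ := mem_sortedRatios.mp hx
    exact hm i
  · intro x hx
    obtain ⟨i, rfl⟩ := mem_sortedRatios.mp hx
    exact hm' i
  · rw [length_sortedRatios, length_sortedRatios]
  · rwa [count_sortedRatios, count_sortedRatios]

variable [Nonempty V]

theorem minRatio_le_ratio (i : V) : minRatio G D d ≤ ratio G D d i :=
  Finset.inf'_le _ (mem_univ i)

theorem minSet_nonempty : (minSet G D d).Nonempty := by
  obtain ⟨i, -, hi⟩ := Finset.exists_mem_eq_inf' univ_nonempty (ratio G D d)
  exact ⟨i, mem_filter.mpr ⟨mem_univ i, hi.symm⟩⟩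

theorem ratio_of_mem_minSet (hi : i ∈ minSet G D d) : ratio G D d i = minRatio G D d :=
  (mem_filter.mp hi).2

theorem LexOpt.minRatio_le (hopt : LexOpt G D d') (hd : IsAlloc G D d) :
    minRatio G D d ≤ minRatio G D d' := by
  by_contra! hlt
  have hcard := hopt.card_ratio_eq_le hd
    (fun i => hlt.le.trans (minRatio_le_ratio i)) minRatio_le_ratio
  have hempty : #{i | ratio G D d i = minRatio G D d'} = 0 :=
    card_eq_zero.mpr <| filter_eq_empty_iff.mpr fun i _ =>
      (hlt.trans_le (minRatio_le_ratio i)).ne'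
  exact (minSet_nonempty (d := d')).card_pos.ne' (Nat.le_zero.mp (hempty ▸ hcard))

theorem LexOpt.card_minSet_le (hopt : LexOpt G D d') (hd : IsAlloc G D d)
    (hmin : minRatio G D d = minRatio G D d') :
    #(minSet G D d') ≤ #(minSet G D d) := by
  have := hopt.card_ratio_eq_le hd (m := minRatio G D d') (hmin ▸ minRatio_le_ratio)
    minRatio_le_ratio
  unfold minSet
  rwa [hmin]

theorem minRatio_le_of_sum_recv_le (hD : ∀ i, 0 ≤ D i)
    (hsum : ∑ i ∈ minSet G D d, recv G d' i ≤ ∑ i ∈ minSet G D d, recv G d i) :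
    minRatio G D d' ≤ minRatio G D d := by
  obtain ⟨i, hi, hle⟩ := Finset.exists_le_of_sum_le minSet_nonempty hsum
  calc minRatio G D d' ≤ ratio G D d' i := minRatio_le_ratio i
    _ ≤ ratio G D d i := div_le_div_of_nonneg_right hle (hD i)
    _ = minRatio G D d := ratio_of_mem_minSet hi

/-- Node by node `d'` delivers to `L₁(d)` at least what `d` does, so the inequality of the sums
forces equality at every node. -/
theorem minSet_subset_of_sum_recv_le (hD : ∀ i, 0 < D i)
    (hmin : minRatio G D d ≤ minRatio G D d')
    (hsum : ∑ i ∈ minSet G D d, recv G d' i ≤ ∑ i ∈ minSet G D d, recv G d i) :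
    minSet G D d ⊆ minSet G D d' := by
  have hle : ∀ i ∈ minSet G D d, recv G d i ≤ recv G d' i := fun i hi => by
    rw [recv_eq_ratio_mul (hD i).ne', recv_eq_ratio_mul (hD i).ne']
    refine mul_le_mul_of_nonneg_right ?_ (hD i).le
    exact (ratio_of_mem_minSet hi).trans_le (hmin.trans (minRatio_le_ratio i))
  have heq := (Finset.sum_eq_sum_iff_of_le hle).mp (le_antisymm (Finset.sum_le_sum hle) hsum)
  intro i hi
  have hratio : ratio G D d' i = ratio G D d i := by simp only [ratio, heq i hi]
  refine mem_filter.mpr ⟨mem_univ i, le_antisymm ?_ (minRatio_le_ratio i)⟩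
  exact hratio ▸ (ratio_of_mem_minSet hi).trans_le hmin

end Allocation

theorem stmt14_general [Fintype V] [Nonempty V] [DecidableEq V] (G : SimpleGraph V) [DecidableRel G.Adj]
    (D : V → ℝ) (hD : ∀ i, 0 < D i)
    (dbar : V → V → ℝ) (hbar : IsAlloc G D dbar)
    (hind : ∀ i ∈ minSet G D dbar, ∀ j ∈ minSet G D dbar, ¬ G.Adj i j)
    (hsum : ∑ i ∈ minSet G D dbar, recv G dbar i = ∑ i ∈ extNbhd G (minSet G D dbar), D i) :
    ∀ dstar : V → V → ℝ, LexOpt G D dstar →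
      minSet G D dbar = minSet G D dstar ∧ minRatio G D dbar = minRatio G D dstar := by
  intro dstar hstar
  have hflow : ∑ i ∈ minSet G D dbar, recv G dstar i ≤ ∑ i ∈ minSet G D dbar, recv G dbar i :=
    hsum ▸ sum_recv_le_sum_extNbhd hstar.1 hind
  have hmin : minRatio G D dbar = minRatio G D dstar :=
    le_antisymm (hstar.minRatio_le hbar) (minRatio_le_of_sum_recv_le (fun i => (hD i).le) hflow)
  have hsub := minSet_subset_of_sum_recv_le hD hmin.le hflow
  exact ⟨eq_of_subset_of_card_le hsub (hstar.card_minSet_le hbar hmin), hmin⟩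

theorem stmt14 [Fintype V] [Nonempty V] [DecidableEq V] (G : SimpleGraph V) [DecidableRel G.Adj]
    (hconn : G.Connected) (D : V → ℝ) (hD : ∀ i, 0 < D i)
    (dbar : V → V → ℝ) (hbar : IsAlloc G D dbar)
    (hK : ∃ i j, ratio G D dbar i ≠ ratio G D dbar j)
    (hind : ∀ i ∈ minSet G D dbar, ∀ j ∈ minSet G D dbar, ¬ G.Adj i j)
    (hsum : ∑ i ∈ minSet G D dbar, recv G dbar i = ∑ i ∈ extNbhd G (minSet G D dbar), D i) :
    ∀ dstar : V → V → ℝ, LexOpt G D dstar →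
      minSet G D dbar = minSet G D dstar ∧ minRatio G D dbar = minRatio G D dstar :=
  stmt14_general G D hD dbar hbar hind hsum
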